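/- arXiv:2604.12181 — 4 statements merged into one kernel-verified Lean document; each statement's English description precedes it below -/
import Mathlib

section
/- Under Assumptions 1–4, every price-equilibrium allocation a* is ordinally efficient. -/
/-!
Under a common shock `ξ = c • 𝟙`, facing prices `p + ξ` with budget `b` is the same as facing
prices `p` with budget `b - c`. Hence every object `x` in the support of an equilibrium lottery
is a cheapest best affordable object at prices `p` for some budget: nothing weakly better than
`x` is cheaper, and everything weakly cheaper is weakly worse. So on that support `p` coincides
with `w x = min {p y | y ≽ x}`, a nonnegative function that is monotone in the preference and
lies below `p` everywhere. Abel summation over the superlevel sets of `w`, which are upper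
contour sets, shows that any allocation stochastically dominating the lottery costs at least as
much at `p`. The null object is in excess supply, hence free, hence always affordable, so every
lottery has total mass one; against a competitor of mass at most one, strict dominance then
forces a strictly higher cost. Weighting by arrivals and summing over agents contradicts
feasibility: by market clearing the equilibrium allocation already spends the whole value
`p ⬝ᵥ s` of the supply.
-/

open MeasureTheory Pointwise

/-- The standard basis vector `e_x` in `ℝ^X`. -/
def basisVec {X : Type*} [DecidableEq X] (x : X) : X → ℝ := fun y => if y = x then 1 else 0

/-- The demand correspondence `D_i(q)`: cheapest most-preferred affordable objects
(as basis vectors), or `{0}` when nothing is affordable. -/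
def Demand {X : Type*} [DecidableEq X] (pref : X → X → Prop) (b : ℝ) (q : X → ℝ) :
    Set (X → ℝ) :=
  {d | (∃ x, q x ≤ b ∧ d = basisVec x ∧
          (∀ y, q y ≤ b → pref x y) ∧
          (∀ y, q y ≤ b → (∀ z, q z ≤ b → pref y z) → q x ≤ q y)) ∨
       ((¬ ∃ x, q x ≤ b) ∧ d = 0)}

/-- Lottery demand: the Aumann integral of the demand correspondence over the
price shock with law `G`. -/
def Lottery {X : Type*} [Fintype X] [DecidableEq X] (pref : X → X → Prop) (b : ℝ)
    (G : Measure (X → ℝ)) (p : X → ℝ) : Set (X → ℝ) :=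
  {a | ∃ g : (X → ℝ) → (X → ℝ), Measurable g ∧
        (∀ᵐ ξ ∂G, g ξ ∈ Demand pref b (p + ξ)) ∧ a = ∫ ξ, g ξ ∂G}

/-- Assumption 1: each coordinate of the price shock is atomless, mean-zero,
and almost surely bounded in `[ξlo, ξhi]`. -/
def Assumption1 {X : Type*} [Fintype X] (G : Measure (X → ℝ)) (ξlo ξhi : ℝ) : Prop :=
  ∀ x : X, (∀ r : ℝ, G {ξ | ξ x = r} = 0) ∧ (∫ ξ, ξ x ∂G) = 0 ∧
    (∀ᵐ ξ ∂G, ξlo ≤ ξ x ∧ ξ x ≤ ξhi)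

open Classical in
/-- `a'` stochastically dominates `a` with respect to the preference `pref`. -/
noncomputable def StochDom {X : Type*} [Fintype X] (pref : X → X → Prop)
    (a' a : X → ℝ) : Prop :=
  ∀ x : X, ∑ y ∈ Finset.univ.filter (fun y => pref y x), a y ≤
    ∑ y ∈ Finset.univ.filter (fun y => pref y x), a' y

open Classical in
/-- Strict stochastic dominance. -/
noncomputable def StrictStochDom {X : Type*} [Fintype X] (pref : X → X → Prop)
    (a' a : X → ℝ) : Prop :=
  StochDom pref a' a ∧
    ∃ x : X, ∑ y ∈ Finset.univ.filter (fun y => pref y x), a y <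
      ∑ y ∈ Finset.univ.filter (fun y => pref y x), a' y

/-- An allocation: each agent gets a sub-probability vector over objects, and the
aggregate consumption does not exceed supply. -/
def FeasibleAlloc {X I : Type*} [Fintype X] [Fintype I]
    (f : I → ℝ) (s : X → ℝ) (a : I → X → ℝ) : Prop :=
  (∀ i x, 0 ≤ a i x ∧ a i x ≤ 1) ∧ (∀ i, ∑ x, a i x ≤ 1) ∧
    (∀ x, ∑ i, f i * a i x ≤ s x)

open Finset Matrix Classical

section Demand

variable {X : Type*} [DecidableEq X] {r : X → X → Prop} {b c : ℝ} {p q d : X → ℝ}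

lemma basisVec_eq_single (x : X) : basisVec x = Pi.single x 1 :=
  funext fun y => (Pi.single_apply x 1 y).symm

lemma mem_demand_cases (hd : d ∈ Demand r b q) : d = 0 ∨ ∃ x, d = basisVec x := by
  rcases hd with ⟨x, -, hx, -⟩ | ⟨-, h0⟩
  · exact Or.inr ⟨x, hx⟩
  · exact Or.inl h0

lemma norm_le_one_of_mem_demand [Fintype X] (hd : d ∈ Demand r b q) : ‖d‖ ≤ 1 := by
  rcases mem_demand_cases hd with rfl | ⟨x, rfl⟩
  · simp
  · rw [basisVec_eq_single, Pi.norm_single, norm_one]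

lemma cheapest_best_of_mem_demand_add_const (htrans : Transitive r) {x : X}
    (h : basisVec x ∈ Demand r b (p + fun _ => c)) :
    (∀ y, r y x → p x ≤ p y) ∧ (∀ y, p y ≤ p x → r x y) := by
  rcases h with ⟨x', hx', hxx', hbest, hcheap⟩ | ⟨-, h0⟩
  · obtain rfl : x = x' := by
      by_contra hne
      simpa [basisVec_eq_single, Pi.single_eq_of_ne hne] using congr_fun hxx' x
    simp only [Pi.add_apply] at hx' hbest hcheap
    refine ⟨fun y hyx => ?_, fun y hy => hbest y (by linarith)⟩
    by_cases hy : p y + c ≤ b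
    · linarith [hcheap y hy fun z hz => htrans hyx (hbest z hz)]
    · linarith
  · simpa [basisVec_eq_single] using congr_fun h0 x

end Demand

section Lottery

variable {X : Type*} [Fintype X] [DecidableEq X] {r : X → X → Prop} {b : ℝ}
  {G : Measure (X → ℝ)} [IsProbabilityMeasure G] {p a : X → ℝ}

theorem exists_integrable_of_mem_lottery (h : a ∈ Lottery r b G p) :
    ∃ g : (X → ℝ) → X → ℝ, Integrable g G ∧ (∀ᵐ ξ ∂G, g ξ ∈ Demand r b (p + ξ)) ∧
      ∀ x, a x = ∫ ξ, g ξ x ∂G := by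
  obtain ⟨g, hmeas, hg, rfl⟩ := h
  have hint : Integrable g G :=
    .of_bound hmeas.aestronglyMeasurable 1 (hg.mono fun _ => norm_le_one_of_mem_demand)
  exact ⟨g, hint, hg, eval_integral hint.eval⟩

theorem apply_le_one_of_mem_lottery (h : a ∈ Lottery r b G p) (x : X) : a x ≤ 1 := by
  obtain ⟨g, hint, hg, ha⟩ := exists_integrable_of_mem_lottery h
  calc a x = ∫ ξ, g ξ x ∂G := ha x
    _ ≤ ∫ _, 1 ∂G := integral_mono_ae (hint.eval x) (integrable_const 1) <|
        hg.mono fun ξ hξ => (Real.le_norm_self _).trans <|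
          (norm_le_pi_norm _ x).trans (norm_le_one_of_mem_demand hξ)
    _ = 1 := by simp

theorem sum_eq_one_of_mem_lottery (h : a ∈ Lottery r b G p)
    (hafford : ∀ᵐ ξ ∂G, ∃ x, (p + ξ) x ≤ b) : ∑ x, a x = 1 := by
  obtain ⟨g, hint, hg, ha⟩ := exists_integrable_of_mem_lottery h
  calc ∑ x, a x = ∫ ξ, ∑ x, g ξ x ∂G := by
        simp_rw [ha]
        exact (integral_finsetSum _ fun x _ => hint.eval x).symm
    _ = ∫ _, 1 ∂G := integral_congr_ae <| by
        filter_upwards [hg, hafford] with ξ hξ hx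
        rcases hξ with ⟨y, -, hy, -⟩ | ⟨hno, -⟩
        · simp [hy, basisVec_eq_single]
        · exact absurd hx hno
    _ = 1 := by simp

theorem frequently_basisVec_mem_demand_of_mem_lottery (h : a ∈ Lottery r b G p) {x : X}
    (hx : a x ≠ 0) : ∃ᵐ ξ ∂G, basisVec x ∈ Demand r b (p + ξ) := by
  obtain ⟨g, -, hg, ha⟩ := exists_integrable_of_mem_lottery h
  refine fun hnot => hx ?_
  rw [ha x]
  refine integral_eq_zero_of_ae ?_
  filter_upwards [hg, hnot] with ξ hξ hξx
  rcases mem_demand_cases hξ with h0 | ⟨y, hy⟩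
  · simp [h0]
  · have hxy : x ≠ y := fun hxy => hξx (hxy ▸ hy ▸ hξ)
    simp [hy, basisVec_eq_single, Pi.single_eq_of_ne hxy]

theorem cheapest_best_of_mem_lottery (htrans : Transitive r)
    (hcommon : ∀ᵐ ξ ∂G, ∀ x y : X, ξ x = ξ y) (h : a ∈ Lottery r b G p) {x : X}
    (hx : a x ≠ 0) : (∀ y, r y x → p x ≤ p y) ∧ (∀ y, p y ≤ p x → r x y) := by
  obtain ⟨ξ, hd, hξ⟩ :=
    ((frequently_basisVec_mem_demand_of_mem_lottery h hx).and_eventually hcommon).exists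
  have hconst : ξ = fun _ => ξ x := funext fun y => hξ y x
  rw [hconst] at hd
  exact cheapest_best_of_mem_demand_add_const htrans hd

end Lottery

noncomputable def minPriceAbove {X : Type*} (r : X → X → Prop) (p : X → ℝ) (x : X) : ℝ :=
  sInf (p '' {y | r y x})

section MinPriceAbove

variable {X : Type*} [Finite X] {r : X → X → Prop} {p : X → ℝ} {x y : X}

lemma minPriceAbove_le (h : r y x) : minPriceAbove r p x ≤ p y :=
  csInf_le (Set.toFinite _).bddBelow ⟨y, h, rfl⟩

lemma exists_minPriceAbove_eq (hx : r x x) : ∃ y, r y x ∧ p y = minPriceAbove r p x :=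
  Set.Nonempty.csInf_mem (s := p '' {y | r y x}) ⟨p x, x, hx, rfl⟩ (Set.toFinite _)

lemma minPriceAbove_nonneg (hp : 0 ≤ p) (hx : r x x) : 0 ≤ minPriceAbove r p x := by
  obtain ⟨y, -, hy⟩ := exists_minPriceAbove_eq (p := p) hx
  exact hy ▸ hp y

lemma minPriceAbove_anti (hrefl : ∀ x, r x x) (htrans : Transitive r) (hxy : r x y) :
    minPriceAbove r p y ≤ minPriceAbove r p x := by
  obtain ⟨z, hzx, hz⟩ := exists_minPriceAbove_eq (p := p) (hrefl x)
  exact hz ▸ minPriceAbove_le (htrans hzx hxy)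

lemma minPriceAbove_eq_self (hx : r x x) (hcheap : ∀ y, r y x → p x ≤ p y) :
    minPriceAbove r p x = p x := by
  obtain ⟨y, hy, hpy⟩ := exists_minPriceAbove_eq (p := p) hx
  exact le_antisymm (minPriceAbove_le hx) (hpy ▸ hcheap y hy)

lemma minPriceAbove_dotProduct [Fintype X] {a : X → ℝ} (hrefl : ∀ x, r x x)
    (hcheap : ∀ x, a x ≠ 0 → ∀ y, r y x → p x ≤ p y) :
    minPriceAbove r p ⬝ᵥ a = p ⬝ᵥ a := by
  refine Finset.sum_congr rfl fun x _ => ?_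
  by_cases hx : a x = 0
  · simp [hx]
  · rw [minPriceAbove_eq_self (hrefl x) (hcheap x hx)]

end MinPriceAbove

section Abel

variable {X : Type*} {s : Finset X} {w d : X → ℝ}

lemma sum_mul_eq_sum_filter_lt_add {m : ℝ} (hm : ∀ x ∈ s, m ≤ w x) :
    ∑ x ∈ s, w x * d x = ∑ x ∈ s with m < w x, (w x - m) * d x + m * ∑ x ∈ s, d x := by
  rw [Finset.mul_sum, Finset.sum_filter_of_ne fun x hx hne => ?_, ← Finset.sum_add_distrib]
  · exact Finset.sum_congr rfl fun x _ => by ring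
  · exact (hm x hx).lt_of_ne fun h => hne (by rw [← h, sub_self, zero_mul])

lemma filter_filter_lt_sub_le_sub {m : ℝ} {x : X} (hx : m < w x) :
    ((s.filter (m < w ·)).filter fun y => w x - m ≤ w y - m) = s.filter (w x ≤ w ·) := by
  ext y
  simp only [mem_filter, sub_le_sub_iff_right]
  exact ⟨fun h => ⟨h.1.1, h.2⟩, fun h => ⟨⟨h.1, hx.trans_le h.2⟩, h.2⟩⟩

theorem sum_mul_nonneg_of_superlevel (hw : ∀ x ∈ s, 0 ≤ w x)
    (hd : ∀ x ∈ s, 0 ≤ ∑ y ∈ s with w x ≤ w y, d y) : 0 ≤ ∑ x ∈ s, w x * d x := by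
  induction s using Finset.strongInduction generalizing w with
  | H s ih =>
  obtain rfl | hs := s.eq_empty_or_nonempty
  · simp
  obtain ⟨xm, hxm, hmin⟩ := s.exists_min_image w hs
  rw [sum_mul_eq_sum_filter_lt_add hmin]
  refine add_nonneg (ih _ (filter_ssubset.2 ⟨xm, hxm, lt_irrefl (w xm)⟩) (fun x hx => ?_)
    fun x hx => ?_) (mul_nonneg (hw xm hxm) ?_)
  · exact sub_nonneg.2 (mem_filter.1 hx).2.le
  · rw [filter_filter_lt_sub_le_sub (mem_filter.1 hx).2]
    exact hd x (mem_filter.1 hx).1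
  · simpa [filter_true_of_mem hmin] using hd xm hxm

theorem sum_mul_pos_of_superlevel (hw : ∀ x ∈ s, 0 ≤ w x)
    (hd : ∀ x ∈ s, 0 ≤ ∑ y ∈ s with w x ≤ w y, d y) {x₀ : X} (hx₀ : x₀ ∈ s) (hw₀ : 0 < w x₀)
    (hd₀ : 0 < ∑ y ∈ s with w x₀ ≤ w y, d y) : 0 < ∑ x ∈ s, w x * d x := by
  induction s using Finset.strongInduction generalizing w with
  | H s ih =>
  obtain ⟨xm, hxm, hmin⟩ := s.exists_min_image w ⟨x₀, hx₀⟩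
  rw [sum_mul_eq_sum_filter_lt_add hmin]
  have hw' : ∀ x ∈ s.filter (w xm < w ·), 0 ≤ w x - w xm :=
    fun x hx => sub_nonneg.2 (mem_filter.1 hx).2.le
  have hd' : ∀ x ∈ s.filter (w xm < w ·),
      0 ≤ ∑ y ∈ s.filter (w xm < w ·) with w x - w xm ≤ w y - w xm, d y := fun x hx => by
    rw [filter_filter_lt_sub_le_sub (mem_filter.1 hx).2]
    exact hd x (mem_filter.1 hx).1
  have hds : ∑ y ∈ s, d y = ∑ y ∈ s with w xm ≤ w y, d y := by rw [filter_true_of_mem hmin]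
  rcases (hmin x₀ hx₀).lt_or_eq with hlt | heq
  · refine add_pos_of_pos_of_nonneg (ih _ (filter_ssubset.2 ⟨xm, hxm, lt_irrefl (w xm)⟩) hw' hd'
      (mem_filter.2 ⟨hx₀, hlt⟩) (sub_pos.2 hlt) ?_) (mul_nonneg (hw xm hxm) (hds ▸ hd xm hxm))
    rwa [filter_filter_lt_sub_le_sub hlt]
  · exact add_pos_of_nonneg_of_pos (sum_mul_nonneg_of_superlevel hw' hd')
      (mul_pos (heq ▸ hw₀) (hds ▸ heq ▸ hd₀))

end Abel

theorem exists_least_of_total {X : Type*} {r : X → X → Prop} (hcomp : ∀ x y, r x y ∨ r y x)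
    (htrans : Transitive r) {s : Finset X} (hs : s.Nonempty) : ∃ z ∈ s, ∀ y ∈ s, r y z := by
  induction hs using Finset.Nonempty.cons_induction with
  | singleton a => exact ⟨a, mem_singleton_self a, by simpa using (hcomp a a).elim id id⟩
  | cons a s ha hs ih =>
    obtain ⟨z, hz, hleast⟩ := ih
    rcases hcomp a z with haz | hza
    · exact ⟨z, mem_cons_of_mem hz, (forall_mem_cons ha _).2 ⟨haz, hleast⟩⟩
    · exact ⟨a, mem_cons_self a s, (forall_mem_cons ha _).2 ⟨(hcomp a a).elim id id,
        fun y hy => htrans (hleast y hy) hza⟩⟩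

section StochasticDominance

variable {X : Type*} [Fintype X] {r : X → X → Prop} {w p a a' : X → ℝ}

theorem StochDom.sum_superlevel_le (hcomp : ∀ x y, r x y ∨ r y x) (htrans : Transitive r)
    (hw : ∀ x y, r x y → w y ≤ w x) (h : StochDom r a' a) (x : X) :
    ∑ y with w x ≤ w y, a y ≤ ∑ y with w x ≤ w y, a' y := by
  obtain ⟨z, hz, hleast⟩ := exists_least_of_total hcomp htrans (s := univ.filter (w x ≤ w ·))
    ⟨x, mem_filter.2 ⟨mem_univ x, le_rfl⟩⟩
  have hupper : univ.filter (w x ≤ w ·) = univ.filter (r · z) := by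
    ext y
    simp only [mem_filter, mem_univ, true_and]
    exact ⟨fun hy => hleast y (mem_filter.2 ⟨mem_univ y, hy⟩),
      fun hyz => (mem_filter.1 hz).2.trans (hw y z hyz)⟩
  rw [hupper]
  exact h z

theorem StochDom.dotProduct_le (hcomp : ∀ x y, r x y ∨ r y x) (htrans : Transitive r)
    (hw₀ : 0 ≤ w) (hw : ∀ x y, r x y → w y ≤ w x) (h : StochDom r a' a) :
    w ⬝ᵥ a ≤ w ⬝ᵥ a' := by
  rw [← sub_nonneg, ← dotProduct_sub]
  refine sum_mul_nonneg_of_superlevel (fun x _ => hw₀ x) fun x _ => ?_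
  simpa [Finset.sum_sub_distrib] using h.sum_superlevel_le hcomp htrans hw x

theorem StochDom.dotProduct_lt (hcomp : ∀ x y, r x y ∨ r y x) (htrans : Transitive r)
    (hw₀ : 0 ≤ w) (hw : ∀ x y, r x y → w y ≤ w x) (h : StochDom r a' a) {x₀ : X}
    (hwx₀ : 0 < w x₀) (hlt : ∑ y with w x₀ ≤ w y, a y < ∑ y with w x₀ ≤ w y, a' y) :
    w ⬝ᵥ a < w ⬝ᵥ a' := by
  rw [← sub_pos, ← dotProduct_sub]
  refine sum_mul_pos_of_superlevel (fun x _ => hw₀ x) (fun x _ => ?_) (mem_univ x₀) hwx₀ ?_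
  · simpa [Finset.sum_sub_distrib] using h.sum_superlevel_le hcomp htrans hw x
  · simpa [Finset.sum_sub_distrib] using hlt

theorem StochDom.cost_le (hcomp : ∀ x y, r x y ∨ r y x) (htrans : Transitive r) (hp : 0 ≤ p)
    (hcheap : ∀ x, a x ≠ 0 → ∀ y, r y x → p x ≤ p y) (ha' : 0 ≤ a') (h : StochDom r a' a) :
    p ⬝ᵥ a ≤ p ⬝ᵥ a' := by
  have hrefl : ∀ x, r x x := fun x => (hcomp x x).elim id id
  calc p ⬝ᵥ a = minPriceAbove r p ⬝ᵥ a := (minPriceAbove_dotProduct hrefl hcheap).symm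
    _ ≤ minPriceAbove r p ⬝ᵥ a' := h.dotProduct_le hcomp htrans
        (fun x => minPriceAbove_nonneg hp (hrefl x)) fun _ _ => minPriceAbove_anti hrefl htrans
    _ ≤ p ⬝ᵥ a' := dotProduct_le_dotProduct_of_nonneg_right
        (fun x => minPriceAbove_le (hrefl x)) ha'

theorem StrictStochDom.cost_lt (hcomp : ∀ x y, r x y ∨ r y x) (htrans : Transitive r)
    (hp : 0 ≤ p) (hcheap : ∀ x, a x ≠ 0 → ∀ y, r y x → p x ≤ p y)
    (hbest : ∀ x, a x ≠ 0 → ∀ y, p y ≤ p x → r x y) (ha' : 0 ≤ a')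
    (htot : ∑ x, a' x ≤ ∑ x, a x) (h : StrictStochDom r a' a) : p ⬝ᵥ a < p ⬝ᵥ a' := by
  obtain ⟨hSD, x₀, hx₀⟩ := h
  have hrefl : ∀ x, r x x := fun x => (hcomp x x).elim id id
  set w := minPriceAbove r p
  have hw₀ : 0 ≤ w := fun x => minPriceAbove_nonneg hp (hrefl x)
  have hsub : univ.filter (r · x₀) ⊆ univ.filter (w x₀ ≤ w ·) := fun y hy =>
    mem_filter.2 ⟨mem_univ y, minPriceAbove_anti hrefl htrans (mem_filter.1 hy).2⟩
  -- the support of `a` meets the superlevel set of `w` at `x₀` only above `x₀`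
  have ha_eq : ∑ y with w x₀ ≤ w y, a y = ∑ y with r y x₀, a y := by
    refine (sum_subset hsub fun y hy hyx₀ => not_not.1 fun hne => hyx₀ ?_).symm
    obtain ⟨z, hzx₀, hz⟩ := exists_minPriceAbove_eq (p := p) (hrefl x₀)
    have hzy : p z ≤ p y := by
      rw [hz, ← minPriceAbove_eq_self (hrefl y) (hcheap y hne)]
      exact (mem_filter.1 hy).2
    exact mem_filter.2 ⟨mem_univ y, htrans (hbest y hne z hzy) hzx₀⟩
  have hlt : ∑ y with w x₀ ≤ w y, a y < ∑ y with w x₀ ≤ w y, a' y :=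
    ha_eq ▸ hx₀.trans_le (sum_le_sum_of_subset_of_nonneg hsub fun y _ _ => ha' y)
  have hwx₀ : 0 < w x₀ := by
    refine (hw₀ x₀).lt_of_ne fun h0 => ?_
    rw [filter_true_of_mem fun y _ => h0 ▸ hw₀ y] at hlt
    exact htot.not_gt hlt
  calc p ⬝ᵥ a = w ⬝ᵥ a := (minPriceAbove_dotProduct hrefl hcheap).symm
    _ < w ⬝ᵥ a' := hSD.dotProduct_lt hcomp htrans hw₀
        (fun _ _ => minPriceAbove_anti hrefl htrans) hwx₀ hlt
    _ ≤ p ⬝ᵥ a' := dotProduct_le_dotProduct_of_nonneg_right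
        (fun x => minPriceAbove_le (hrefl x)) ha'

end StochasticDominance

theorem price_eq_zero_of_excess_supply {X I : Type*} [Fintype I] {F : I → ℝ} {p s : X → ℝ}
    {a : I → X → ℝ} (hF : ∀ i, 0 ≤ F i) {o : X} (ha : ∀ i, a i o ≤ 1)
    (ho : ∑ i, F i < s o) (hp : 0 ≤ p o) (hclear : 0 < p o → ∑ i, F i * a i o = s o) :
    p o = 0 := by
  refine hp.eq_or_lt.elim Eq.symm fun hpos => absurd (hclear hpos) (ne_of_lt ?_)
  calc ∑ i, F i * a i o ≤ ∑ i, F i := sum_le_sum fun i _ => mul_le_of_le_one_right (hF i) (ha i)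
    _ < s o := ho

section Market

variable {X I : Type*} [Fintype X] [Fintype I] {F : I → ℝ} {p s : X → ℝ} {a a' : I → X → ℝ}

lemma sum_mul_dotProduct (F : I → ℝ) (p : X → ℝ) (a : I → X → ℝ) :
    ∑ i, F i * (p ⬝ᵥ a i) = p ⬝ᵥ fun x => ∑ i, F i * a i x := by
  simp only [dotProduct, Finset.mul_sum]
  rw [Finset.sum_comm]
  exact Finset.sum_congr rfl fun x _ => Finset.sum_congr rfl fun i _ => by ring

theorem sum_mul_cost_le_of_clearing (hp : 0 ≤ p) (hfeas : ∀ x, ∑ i, F i * a i x ≤ s x)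
    (hclear : ∀ x, 0 < p x → ∑ i, F i * a' i x = s x) :
    ∑ i, F i * (p ⬝ᵥ a i) ≤ ∑ i, F i * (p ⬝ᵥ a' i) := by
  rw [sum_mul_dotProduct, sum_mul_dotProduct]
  calc p ⬝ᵥ (fun x => ∑ i, F i * a i x) ≤ p ⬝ᵥ s :=
        dotProduct_le_dotProduct_of_nonneg_left hfeas hp
    _ = p ⬝ᵥ fun x => ∑ i, F i * a' i x := Finset.sum_congr rfl fun x _ => by
        rcases (hp x).eq_or_lt with h | h
        · simp [← h]
        · dsimp only
          rw [hclear x h]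

end Market
theorem price_equilibrium_allocation_ordinally_efficient_general
    {X I : Type*} [Fintype X] [DecidableEq X] [Fintype I]
    (pref : I → X → X → Prop)
    (hcomplete : ∀ i x y, pref i x y ∨ pref i y x)
    (htrans : ∀ i, Transitive (pref i))
    (b : I → ℝ)
    (G : Measure (X → ℝ)) [IsProbabilityMeasure G]
    (ξlo ξhi : ℝ) (hA1 : Assumption1 G ξlo ξhi)
    -- Assumption 2
    (Blo Bhi : ℝ)
    (hA2 : ∀ i, Blo ≤ b i ∧ b i ≤ Bhi)
    -- Assumption 3: the price shock is bounded away from budgets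
    (hA3 : ξhi < Blo)
    -- Assumption 4 (no tie-breaking): the shock is a common shock `c·𝟙`
    (hA4 : ∀ᵐ ξ ∂G, ∀ x y : X, ξ x = ξ y)
    -- arrivals
    (T : ℕ)
    (f : ℕ → I → ℝ) (hf : ∀ t i, 0 ≤ f t i)
    -- supply, with a null object `o` in excess supply
    (s : X → ℝ)
    (o : X) (ho : ∑ i, ∑ n ∈ Finset.Icc 1 T, f n i < s o)
    -- a price equilibrium `p` with equilibrium allocation `astar`
    (p : X → ℝ) (hp : ∀ x, 0 ≤ p x)
    (astar : I → X → ℝ)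
    (hastar : ∀ i, astar i ∈ Lottery (pref i) (b i) G p)
    (hclear : ∀ x, 0 < p x → ∑ i, (∑ n ∈ Finset.Icc 1 T, f n i) * astar i x = s x) :
    -- ordinal efficiency: no feasible allocation stochastically dominates `astar`
    ¬ ∃ a : I → X → ℝ,
        FeasibleAlloc (fun i => ∑ n ∈ Finset.Icc 1 T, f n i) s a ∧
        (∀ i, StochDom (pref i) (a i) (astar i)) ∧
        (∃ i, 0 < ∑ n ∈ Finset.Icc 1 T, f n i ∧
          StrictStochDom (pref i) (a i) (astar i)) := by
  rintro ⟨a, ⟨ha_bounds, ha_sum, ha_feas⟩, hSD, i₀, hF₀, hstrict⟩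
  have hF : ∀ i, 0 ≤ ∑ n ∈ Finset.Icc 1 T, f n i := fun i => sum_nonneg fun n _ => hf n i
  have hpo : p o = 0 := price_eq_zero_of_excess_supply hF
    (fun i => apply_le_one_of_mem_lottery (hastar i) o) ho (hp o) (hclear o)
  have htot : ∀ i, ∑ x, astar i x = 1 := fun i => sum_eq_one_of_mem_lottery (hastar i) <| by
    filter_upwards [(hA1 o).2.2] with ξ hξ
    exact ⟨o, by simp only [Pi.add_apply, hpo]; linarith [(hA2 i).1]⟩
  have hchoice := fun i x (hx : astar i x ≠ 0) =>
    cheapest_best_of_mem_lottery (htrans i) hA4 (hastar i) hx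
  have hcost : ∀ i, p ⬝ᵥ astar i ≤ p ⬝ᵥ a i := fun i =>
    (hSD i).cost_le (hcomplete i) (htrans i) hp (fun x hx => (hchoice i x hx).1)
      fun x => (ha_bounds i x).1
  have hcost₀ : p ⬝ᵥ astar i₀ < p ⬝ᵥ a i₀ :=
    hstrict.cost_lt (hcomplete i₀) (htrans i₀) hp (fun x hx => (hchoice i₀ x hx).1)
      (fun x hx => (hchoice i₀ x hx).2) (fun x => (ha_bounds i₀ x).1) (htot i₀ ▸ ha_sum i₀)
  exact (sum_mul_cost_le_of_clearing hp ha_feas hclear).not_gt <|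
    sum_lt_sum (fun i _ => mul_le_mul_of_nonneg_left (hcost i) (hF i))
      ⟨i₀, mem_univ i₀, mul_lt_mul_of_pos_left hcost₀ hF₀⟩

/-- Theorem 2: under Assumptions 1–4 (no tie-breaking), every
price-equilibrium allocation is ordinally efficient. -/
theorem price_equilibrium_allocation_ordinally_efficient
    {X I : Type*} [Fintype X] [DecidableEq X] [Fintype I]
    (pref : I → X → X → Prop)
    (hcomplete : ∀ i x y, pref i x y ∨ pref i y x)
    (htrans : ∀ i, Transitive (pref i))
    (b : I → ℝ)
    (G : Measure (X → ℝ)) [IsProbabilityMeasure G]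
    (ξlo ξhi : ℝ) (hA1 : Assumption1 G ξlo ξhi)
    -- Assumption 2
    (Blo Bhi : ℝ) (hBlo : 0 < Blo) (hBhi : Blo ≤ Bhi)
    (hA2 : ∀ i, Blo ≤ b i ∧ b i ≤ Bhi)
    -- Assumption 3: the price shock is bounded away from budgets
    (hA3 : ξhi < Blo)
    -- Assumption 4 (no tie-breaking): the shock is a common shock `c·𝟙`
    (hA4 : ∀ᵐ ξ ∂G, ∀ x y : X, ξ x = ξ y)
    -- arrivals
    (T : ℕ) (hT : 0 < T)
    (f : ℕ → I → ℝ) (hf : ∀ t i, 0 ≤ f t i)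
    (hfsum : ∀ t ∈ Finset.Icc 1 T, ∑ i, f t i = 1)
    -- supply, with a null object `o` in excess supply
    (s : X → ℝ) (hs : ∀ x, 0 < s x)
    (o : X) (ho : ∑ i, ∑ n ∈ Finset.Icc 1 T, f n i < s o)
    -- a price equilibrium `p` with equilibrium allocation `astar`
    (p : X → ℝ) (hp : ∀ x, 0 ≤ p x)
    (astar : I → X → ℝ)
    (hastar : ∀ i, astar i ∈ Lottery (pref i) (b i) G p)
    (hfeas : ∀ x, ∑ i, (∑ n ∈ Finset.Icc 1 T, f n i) * astar i x ≤ s x)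
    (hclear : ∀ x, 0 < p x → ∑ i, (∑ n ∈ Finset.Icc 1 T, f n i) * astar i x = s x) :
    -- ordinal efficiency: no feasible allocation stochastically dominates `astar`
    ¬ ∃ a : I → X → ℝ,
        FeasibleAlloc (fun i => ∑ n ∈ Finset.Icc 1 T, f n i) s a ∧
        (∀ i, StochDom (pref i) (a i) (astar i)) ∧
        (∃ i, 0 < ∑ n ∈ Finset.Icc 1 T, f n i ∧
          StrictStochDom (pref i) (a i) (astar i)) :=
  price_equilibrium_allocation_ordinally_efficient_general pref hcomplete htrans b G ξlo ξhi hA1 Blo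
    Bhi hA2 hA3 hA4 T f hf s o ho p hp astar hastar hclear
end

section
/- Under Assumptions 1 and 5, for each agent type i the lottery demand L_i(p) is a singleton for every p ∈ ℝ^X, and the map assigning to p the unique element of L_i(p) is continuous; consequently, for any nonnegative weights f^{t,T}(i), the aggregate demand D^t(p) = Σ_{i∈I} f^{t,T}(i)·L_i(p) is a single-valued continuous function of p. -/
open MeasureTheory Pointwise

set_option linter.unusedSectionVars false
set_option linter.unusedVariables false
set_option maxHeartbeats 1000000

open Filter ProbabilityTheory

section Aux

variable {X : Type*} [Fintype X] [DecidableEq X]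

open Classical in
noncomputable def selS (pref : X → X → Prop) (b : ℝ) (q : X → ℝ) : Finset X :=
  Finset.univ.filter fun x =>
    q x ≤ b ∧ (∀ y, q y ≤ b → pref x y) ∧
      ∀ y, q y ≤ b → (∀ z, q z ≤ b → pref y z) → q x ≤ q y

lemma mem_selS {pref : X → X → Prop} {b : ℝ} {q : X → ℝ} {x : X} :
    x ∈ selS pref b q ↔
      q x ≤ b ∧ (∀ y, q y ≤ b → pref x y) ∧
        ∀ y, q y ≤ b → (∀ z, q z ≤ b → pref y z) → q x ≤ q y := by
  classical
  simp [selS]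

noncomputable def selF : Finset X → (X → ℝ) :=
  fun s => if h : s.Nonempty then basisVec h.choose else 0

noncomputable def sel (pref : X → X → Prop) (b : ℝ) (q : X → ℝ) : X → ℝ :=
  selF (selS pref b q)

lemma exists_max {pref : X → X → Prop} (hcomp : ∀ x y, pref x y ∨ pref y x)
    (htrans : Transitive pref) (A : Finset X) (hA : A.Nonempty) :
    ∃ x ∈ A, ∀ y ∈ A, pref x y := by
  classical
  induction A using Finset.induction_on with
  | empty => exact absurd hA (by simp)
  | @insert a s ha ih =>
    rcases s.eq_empty_or_nonempty with rfl | hs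
    · refine ⟨a, by simp, ?_⟩
      intro y hy
      simp only [Finset.mem_insert, Finset.notMem_empty, or_false] at hy
      subst hy
      exact (hcomp _ _).elim id id
    · obtain ⟨x, hxs, hx⟩ := ih hs
      rcases hcomp a x with h | h
      · refine ⟨a, Finset.mem_insert_self a s, ?_⟩
        intro y hy
        rcases Finset.mem_insert.mp hy with rfl | hy
        · exact (hcomp y y).elim id id
        · exact htrans h (hx y hy)
      · refine ⟨x, Finset.mem_insert_of_mem hxs, ?_⟩
        intro y hy
        rcases Finset.mem_insert.mp hy with rfl | hy
        · exact h
        · exact hx y hy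

lemma selS_nonempty {pref : X → X → Prop} (hcomp : ∀ x y, pref x y ∨ pref y x)
    (htrans : Transitive pref) {b : ℝ} {q : X → ℝ} (hq : ∃ x, q x ≤ b) :
    (selS pref b q).Nonempty := by
  classical
  set A : Finset X := Finset.univ.filter (fun x => q x ≤ b) with hA
  have hAne : A.Nonempty := by
    obtain ⟨x, hx⟩ := hq
    exact ⟨x, by simp [hA, hx]⟩
  set M : Finset X := A.filter (fun x => ∀ y ∈ A, pref x y) with hM
  have hMne : M.Nonempty := by
    obtain ⟨x, hxA, hx⟩ := exists_max hcomp htrans A hAne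
    exact ⟨x, by simp only [hM, Finset.mem_filter]; exact ⟨hxA, hx⟩⟩
  obtain ⟨x, hxM, hmin⟩ := M.exists_min_image q hMne
  have hxA : x ∈ A := (Finset.mem_filter.mp hxM).1
  have hxmax : ∀ y ∈ A, pref x y := (Finset.mem_filter.mp hxM).2
  refine ⟨x, mem_selS.mpr ⟨?_, ?_, ?_⟩⟩
  · simpa [hA] using hxA
  · intro y hy
    exact hxmax y (by simp [hA, hy])
  · intro y hy hymax
    refine hmin y ?_
    simp only [hM, Finset.mem_filter]
    refine ⟨by simp [hA, hy], ?_⟩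
    intro z hz
    exact hymax z (by simpa [hA] using hz)

lemma sel_mem {pref : X → X → Prop} (hcomp : ∀ x y, pref x y ∨ pref y x)
    (htrans : Transitive pref) (b : ℝ) (q : X → ℝ) :
    sel pref b q ∈ Demand pref b q := by
  unfold sel selF
  by_cases h : (selS pref b q).Nonempty
  · rw [dif_pos h]
    obtain ⟨h1, h2, h3⟩ := mem_selS.mp h.choose_spec
    exact Or.inl ⟨h.choose, h1, rfl, h2, h3⟩
  · rw [dif_neg h]
    refine Or.inr ⟨?_, rfl⟩
    intro hq
    exact h (selS_nonempty hcomp htrans hq)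

lemma basisVec_injective : Function.Injective (basisVec (X := X)) := by
  intro x y h
  by_contra hxy
  have := congrFun h x
  simp [basisVec, hxy, Ne.symm hxy] at this

lemma demand_subsingleton {pref : X → X → Prop} {b : ℝ} {q : X → ℝ}
    (hq : ∀ x y, x ≠ y → q x ≠ q y) {d d' : X → ℝ}
    (hd : d ∈ Demand pref b q) (hd' : d' ∈ Demand pref b q) : d = d' := by
  rcases hd with ⟨x, hxb, rfl, hxm, hxc⟩ | ⟨hne, rfl⟩
  · rcases hd' with ⟨x', hxb', rfl, hxm', hxc'⟩ | ⟨hne', _⟩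
    · have h1 : q x ≤ q x' := hxc x' hxb' hxm'
      have h2 : q x' ≤ q x := hxc' x hxb hxm
      have : x = x' := by
        by_contra hxx
        exact hq x x' hxx (le_antisymm h1 h2)
      rw [this]
    · exact absurd ⟨x, hxb⟩ hne'
  · rcases hd' with ⟨x', hxb', rfl, _, _⟩ | ⟨_, rfl⟩
    · exact absurd ⟨x', hxb'⟩ hne
    · rfl

lemma selS_subset {pref : X → X → Prop} {b : ℝ} {q q' : X → ℝ}
    (h1 : ∀ x, q' x ≤ b ↔ q x ≤ b) (h2 : ∀ x y, q' x ≤ q' y ↔ q x ≤ q y) :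
    selS pref b q' ⊆ selS pref b q := by
  intro x hx
  obtain ⟨ha, hm, hc⟩ := mem_selS.mp hx
  refine mem_selS.mpr ⟨(h1 x).mp ha, fun y hy => hm y ((h1 y).mpr hy), ?_⟩
  intro y hy hmax
  exact (h2 x y).mp (hc y ((h1 y).mpr hy) fun z hz => hmax z ((h1 z).mp hz))

lemma sel_eq {pref : X → X → Prop} {b : ℝ} {q q' : X → ℝ}
    (h1 : ∀ x, q' x ≤ b ↔ q x ≤ b) (h2 : ∀ x y, q' x ≤ q' y ↔ q x ≤ q y) :
    sel pref b q' = sel pref b q := by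
  have : selS pref b q' = selS pref b q :=
    Finset.Subset.antisymm (selS_subset h1 h2)
      (selS_subset (fun x => (h1 x).symm) (fun x y => (h2 x y).symm))
  unfold sel
  rw [this]

lemma norm_sel_le (pref : X → X → Prop) (b : ℝ) (q : X → ℝ) :
    ‖sel pref b q‖ ≤ 1 := by
  unfold sel selF
  by_cases h : (selS pref b q).Nonempty
  · rw [dif_pos h]
    refine (pi_norm_le_iff_of_nonneg zero_le_one).mpr fun y => ?_
    simp only [basisVec]
    split <;> simp
  · rw [dif_neg h]; simp

lemma measurable_memS (pref : X → X → Prop) (b : ℝ) (x : X) :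
    MeasurableSet {q : X → ℝ | x ∈ selS pref b q} := by
  have h1 : ∀ y : X, MeasurableSet {q : X → ℝ | q y ≤ b} :=
    fun y => measurableSet_le (measurable_pi_apply y) measurable_const
  have h2 : ∀ y z : X, MeasurableSet {q : X → ℝ | q y ≤ q z} :=
    fun y z => measurableSet_le (measurable_pi_apply y) (measurable_pi_apply z)
  have hmax : ∀ y : X, MeasurableSet {q : X → ℝ | ∀ z, q z ≤ b → pref y z} := by
    intro y
    have he : {q : X → ℝ | ∀ z, q z ≤ b → pref y z} = ⋂ z, {q | q z ≤ b → pref y z} := by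
      ext q; simp
    rw [he]
    refine MeasurableSet.iInter fun z => ?_
    by_cases h : pref y z
    · simp [h]
    · have : {q : X → ℝ | q z ≤ b → pref y z} = {q : X → ℝ | q z ≤ b}ᶜ := by
        ext q; simp [h]
      rw [this]; exact (h1 z).compl
  have h3 : ∀ y : X,
      MeasurableSet {q : X → ℝ | q y ≤ b → (∀ z, q z ≤ b → pref y z) → q x ≤ q y} := by
    intro y
    have : {q : X → ℝ | q y ≤ b → (∀ z, q z ≤ b → pref y z) → q x ≤ q y}
        = {q : X → ℝ | q y ≤ b}ᶜ ∪ ({q : X → ℝ | ∀ z, q z ≤ b → pref y z}ᶜ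
            ∪ {q : X → ℝ | q x ≤ q y}) := by
      ext q
      simp only [Set.mem_union, Set.mem_compl_iff, Set.mem_setOf_eq]
      tauto
    rw [this]
    exact (h1 y).compl.union (((hmax y).compl).union (h2 x y))
  have : {q : X → ℝ | x ∈ selS pref b q} =
      {q : X → ℝ | q x ≤ b} ∩ ({q : X → ℝ | ∀ y, q y ≤ b → pref x y} ∩
        ⋂ y, {q : X → ℝ | q y ≤ b → (∀ z, q z ≤ b → pref y z) → q x ≤ q y}) := by
    ext q
    simp only [mem_selS, Set.mem_inter_iff, Set.mem_setOf_eq, Set.mem_iInter]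
  rw [this]
  exact (h1 x).inter ((hmax x).inter (MeasurableSet.iInter h3))

lemma measurable_sel (pref : X → X → Prop) (b : ℝ) :
    Measurable (sel pref b) := by
  letI : MeasurableSpace (Finset X) := ⊤
  have hS : Measurable (selS pref b) := by
    intro t _
    have ht : selS pref b ⁻¹' t = ⋃ u ∈ t, selS pref b ⁻¹' {u} := by
      ext q; simp
    rw [ht]
    refine MeasurableSet.biUnion (Set.to_countable t) fun u _ => ?_
    have hu : selS pref b ⁻¹' {u} = ⋂ x : X, {q | x ∈ selS pref b q ↔ x ∈ u} := by
      ext q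
      simp [Set.mem_preimage, Finset.ext_iff]
    rw [hu]
    refine MeasurableSet.iInter fun x => ?_
    by_cases hx : x ∈ u
    · have : {q : X → ℝ | x ∈ selS pref b q ↔ x ∈ u} = {q | x ∈ selS pref b q} := by
        ext q; simp [hx]
      rw [this]; exact measurable_memS pref b x
    · have : {q : X → ℝ | x ∈ selS pref b q ↔ x ∈ u} = {q | x ∈ selS pref b q}ᶜ := by
        ext q; simp [hx]
      rw [this]; exact (measurable_memS pref b x).compl
  exact measurable_from_top.comp hS

end Aux

section Mid

open Filter

variable {X : Type*} [Fintype X] [DecidableEq X]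

lemma measurable_shift (p : X → ℝ) : Measurable (fun ξ : X → ℝ => p + ξ) :=
  measurable_pi_lambda _ fun x => (show Measurable fun ξ : X → ℝ => p x + ξ x by fun_prop)

lemma lottery_eq_singleton {pref : X → X → Prop} (hcomp : ∀ x y, pref x y ∨ pref y x)
    (htrans : Transitive pref) {b : ℝ} {G : Measure (X → ℝ)} {p : X → ℝ}
    (hGood : ∀ᵐ ξ ∂G, ∀ x y, x ≠ y → p x + ξ x ≠ p y + ξ y) :
    Lottery pref b G p = {∫ ξ, sel pref b (p + ξ) ∂G} := by
  apply Set.Subset.antisymm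
  · rintro a ⟨g, hgm, hgmem, rfl⟩
    have : ∫ ξ, g ξ ∂G = ∫ ξ, sel pref b (p + ξ) ∂G := by
      apply integral_congr_ae
      filter_upwards [hgmem, hGood] with ξ h1 h2
      refine demand_subsingleton ?_ h1 (sel_mem hcomp htrans b (p + ξ))
      intro x y hxy
      simpa [Pi.add_apply] using h2 x y hxy
    simp [this]
  · rintro a rfl
    exact ⟨fun ξ => sel pref b (p + ξ), (measurable_sel pref b).comp (measurable_shift p),
      Filter.Eventually.of_forall fun ξ => sel_mem hcomp htrans b (p + ξ), rfl⟩

lemma continuous_integral_sel {pref : X → X → Prop} {b : ℝ} {G : Measure (X → ℝ)}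
    [IsProbabilityMeasure G]
    (hGood : ∀ p : X → ℝ, ∀ᵐ ξ ∂G,
      (∀ x y, x ≠ y → p x + ξ x ≠ p y + ξ y) ∧ ∀ x, p x + ξ x ≠ b) :
    Continuous (fun p : X → ℝ => ∫ ξ, sel pref b (p + ξ) ∂G) := by
  rw [continuous_iff_seqContinuous]
  intro u p hu
  have hux : ∀ x : X, Tendsto (fun n => u n x) atTop (nhds (p x)) := by
    intro x
    exact (tendsto_pi_nhds.mp hu) x
  refine tendsto_integral_of_dominated_convergence (fun _ => 1)
    (fun n => ((measurable_sel pref b).comp (measurable_shift (u n))).aestronglyMeasurable)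
    (integrable_const 1)
    (fun n => Filter.Eventually.of_forall fun ξ => norm_sel_le pref b (u n + ξ))
    ?_
  filter_upwards [hGood p] with ξ hξ
  obtain ⟨hd, hbud⟩ := hξ
  have hEv : ∀ᶠ n in atTop, sel pref b (u n + ξ) = sel pref b (p + ξ) := by
    have hE1 : ∀ᶠ n in atTop, ∀ x : X, (u n x + ξ x ≤ b ↔ p x + ξ x ≤ b) := by
      rw [eventually_all]
      intro x
      have ht : Tendsto (fun n => u n x + ξ x) atTop (nhds (p x + ξ x)) :=
        (hux x).add_const (ξ x)
      rcases lt_or_gt_of_ne (hbud x) with h | h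
      · filter_upwards [ht.eventually_lt_const h] with n hn
        simp [hn.le, h.le]
      · filter_upwards [ht.eventually_const_lt h] with n hn
        simp [not_le.mpr hn, not_le.mpr h]
    have hE2 : ∀ᶠ n in atTop, ∀ x y : X,
        (u n x + ξ x ≤ u n y + ξ y ↔ p x + ξ x ≤ p y + ξ y) := by
      rw [eventually_all]
      intro x
      rw [eventually_all]
      intro y
      by_cases hxy : x = y
      · subst hxy; exact Filter.Eventually.of_forall fun n => by simp
      · have htx : Tendsto (fun n => u n x + ξ x) atTop (nhds (p x + ξ x)) :=
          (hux x).add_const (ξ x)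
        have hty : Tendsto (fun n => u n y + ξ y) atTop (nhds (p y + ξ y)) :=
          (hux y).add_const (ξ y)
        rcases lt_or_gt_of_ne (hd x y hxy) with h | h
        · filter_upwards [htx.eventually_lt hty h] with n hn
          simp [hn.le, h.le]
        · filter_upwards [hty.eventually_lt htx h] with n hn
          simp [not_le.mpr hn, not_le.mpr h]
    filter_upwards [hE1, hE2] with n h1 h2
    refine sel_eq (fun x => ?_) (fun x y => ?_)
    · simpa [Pi.add_apply] using h1 x
    · simpa [Pi.add_apply] using h2 x y
  exact Tendsto.congr' (hEv.mono fun n hn => hn.symm) tendsto_const_nhds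

end Mid

lemma sum_set_singleton {ι M : Type*} [AddCommMonoid M] (s : Finset ι) (f : ι → M) :
    (∑ i ∈ s, ({f i} : Set M)) = {∑ i ∈ s, f i} := by
  classical
  induction s using Finset.cons_induction with
  | empty => exact Set.singleton_zero.symm
  | cons a s ha ih =>
    rw [Finset.sum_cons, Finset.sum_cons, ih, Set.singleton_add_singleton]


/-- Theorem 3 (part ii): under Assumptions 1 and 5 (random tie-breaking), each
agent's lottery demand is single-valued and continuous in the base price, and
hence aggregate demand is a single-valued continuous function of prices. -/
theorem rtb_lottery_demand_singleton_continuous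
    {X I : Type*} [Fintype X] [DecidableEq X] [Fintype I]
    {Ω : Type*} [MeasurableSpace Ω] (μ : Measure Ω) [IsProbabilityMeasure μ]
    (pref : I → X → X → Prop)
    (hcomplete : ∀ i x y, pref i x y ∨ pref i y x)
    (htrans : ∀ i, Transitive (pref i))
    (b : I → ℝ) (hb : ∀ i, 0 < b i)
    -- Assumption 5 (random tie-breaking): ξ_x = c + ζ_x with (ζ_x) mutually
    -- independent and independent of c, each atomless and supported in [−z, z]
    (z : ℝ) (hz : 0 ≤ z)
    (c : Ω → ℝ) (hc : Measurable c)
    (ζ : X → Ω → ℝ) (hζ : ∀ x, Measurable (ζ x))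
    (hindep : ProbabilityTheory.iIndepFun ζ μ)
    (hcindep : ProbabilityTheory.IndepFun c (fun ω x => ζ x ω) μ)
    (hatomless : ∀ x r, μ {ω | ζ x ω = r} = 0)
    (hsupp : ∀ x, ∀ᵐ ω ∂μ, |ζ x ω| ≤ z)
    -- the law of the price shock ξ = c·𝟙 + ζ
    (G : Measure (X → ℝ))
    (hG : G = Measure.map (fun ω x => c ω + ζ x ω) μ)
    (ξlo ξhi : ℝ) (hA1 : Assumption1 G ξlo ξhi) :
    ∃ ℓ : I → (X → ℝ) → (X → ℝ),
      (∀ i p, Lottery (pref i) (b i) G p = {ℓ i p}) ∧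
      (∀ i, Continuous (ℓ i)) ∧
      ∀ w : I → ℝ, (∀ i, 0 ≤ w i) →
        (∀ p : X → ℝ,
          (∑ i : I, w i • Lottery (pref i) (b i) G p) = {∑ i : I, w i • ℓ i p}) ∧
        Continuous (fun p : X → ℝ => ∑ i : I, w i • ℓ i p) := by
  classical
  have hf : Measurable (fun ω x => c ω + ζ x ω) :=
    measurable_pi_lambda _ fun x => hc.add (hζ x)
  haveI : IsProbabilityMeasure G := by
    rw [hG]; exact Measure.isProbabilityMeasure_map hf.aemeasurable
  -- key: differences of coordinates are atomless under G
  have key : ∀ (x y : X), x ≠ y → ∀ r : ℝ, G {ξ : X → ℝ | ξ x - ξ y = r} = 0 := by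
    intro x y hxy r
    have hms : MeasurableSet {ξ : X → ℝ | ξ x - ξ y = r} := by
      have : {ξ : X → ℝ | ξ x - ξ y = r} = (fun ξ : X → ℝ => ξ x - ξ y) ⁻¹' {r} := rfl
      rw [this]
      exact ((measurable_pi_apply x).sub (measurable_pi_apply y)) (measurableSet_singleton r)
    rw [hG, Measure.map_apply hf hms]
    have hpre : (fun ω x => c ω + ζ x ω) ⁻¹' {ξ : X → ℝ | ξ x - ξ y = r}
        = {ω | ζ x ω - ζ y ω = r} := by
      ext ω
      simp only [Set.mem_preimage, Set.mem_setOf_eq]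
      constructor <;> intro h <;> linarith
    rw [hpre]
    have hind : IndepFun (ζ x) (ζ y) μ := hindep.indepFun hxy
    have hmap : μ.map (fun ω => (ζ x ω, ζ y ω)) = (μ.map (ζ x)).prod (μ.map (ζ y)) :=
      (indepFun_iff_map_prod_eq_prod_map_map (hζ x).aemeasurable (hζ y).aemeasurable).mp hind
    have hset : MeasurableSet {v : ℝ × ℝ | v.1 - v.2 = r} := by
      have : {v : ℝ × ℝ | v.1 - v.2 = r} = (fun v : ℝ × ℝ => v.1 - v.2) ⁻¹' {r} := rfl
      rw [this]
      exact (measurable_fst.sub measurable_snd) (measurableSet_singleton r)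
    have heq : {ω | ζ x ω - ζ y ω = r}
        = (fun ω => (ζ x ω, ζ y ω)) ⁻¹' {v : ℝ × ℝ | v.1 - v.2 = r} := rfl
    rw [heq, ← Measure.map_apply ((hζ x).prodMk (hζ y)) hset, hmap,
      Measure.prod_apply hset]
    have hslice : ∀ a : ℝ, (μ.map (ζ y)) (Prod.mk a ⁻¹' {v : ℝ × ℝ | v.1 - v.2 = r}) = 0 := by
      intro a
      have : Prod.mk a ⁻¹' {v : ℝ × ℝ | v.1 - v.2 = r} = {a - r} := by
        ext t
        simp only [Set.mem_preimage, Set.mem_setOf_eq, Set.mem_singleton_iff]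
        constructor <;> intro h <;> linarith
      rw [this, Measure.map_apply (hζ y) (measurableSet_singleton _)]
      exact hatomless y (a - r)
    simp only [hslice, lintegral_zero]
  -- the good event
  have hGood : ∀ (i : I) (p : X → ℝ), ∀ᵐ ξ ∂G,
      (∀ x y, x ≠ y → p x + ξ x ≠ p y + ξ y) ∧ ∀ x, p x + ξ x ≠ b i := by
    intro i p
    have h1 : ∀ᵐ ξ ∂G, ∀ x y : X, x ≠ y → p x + ξ x ≠ p y + ξ y := by
      rw [ae_all_iff]
      intro x
      rw [ae_all_iff]
      intro y
      by_cases hxy : x = y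
      · exact Filter.Eventually.of_forall fun ξ h => absurd hxy h
      · rw [ae_iff]
        refine measure_mono_null ?_ (key x y hxy (p y - p x))
        intro ξ hξ
        simp only [Set.mem_setOf_eq, not_forall, not_not] at hξ
        obtain ⟨-, h⟩ := hξ
        simp only [Set.mem_setOf_eq]
        linarith
    have h2 : ∀ᵐ ξ ∂G, ∀ x : X, p x + ξ x ≠ b i := by
      rw [ae_all_iff]
      intro x
      rw [ae_iff]
      refine measure_mono_null ?_ ((hA1 x).1 (b i - p x))
      intro ξ hξ
      simp only [Set.mem_setOf_eq, not_not] at hξ ⊢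
      linarith
    exact h1.and h2
  refine ⟨fun i p => ∫ ξ, sel (pref i) (b i) (p + ξ) ∂G, ?_, ?_, ?_⟩
  · intro i p
    exact lottery_eq_singleton (hcomplete i) (htrans i) ((hGood i p).mono fun ξ h => h.1)
  · intro i
    exact continuous_integral_sel (hGood i)
  · intro w hw
    constructor
    · intro p
      have h1 : ∀ i : I, w i • Lottery (pref i) (b i) G p
          = ({w i • ∫ ξ, sel (pref i) (b i) (p + ξ) ∂G} : Set (X → ℝ)) := by
        intro i
        rw [lottery_eq_singleton (hcomplete i) (htrans i)
          ((hGood i p).mono fun ξ h => h.1), Set.smul_set_singleton]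
      calc ∑ i : I, w i • Lottery (pref i) (b i) G p
          = ∑ i : I, ({w i • ∫ ξ, sel (pref i) (b i) (p + ξ) ∂G} : Set (X → ℝ)) :=
            Finset.sum_congr rfl fun i _ => h1 i
        _ = {∑ i : I, w i • ∫ ξ, sel (pref i) (b i) (p + ξ) ∂G} :=
            sum_set_singleton _ _
    · exact continuous_finset_sum _ fun i _ =>
        (continuous_integral_sel (hGood i)).const_smul (w i)
end

section
/- Under Assumptions 1–3, if the budgets are nonincreasing in arrival time (b_j ≤ b_i whenever t_i ≤ t_j), then every price-equilibrium allocation a* is equal-type envy-free with respect to the arrival-time order: for all i, j ∈ I, if a*(j) strictly stochastically dominates a*(i) with respect to ≽_i, then t_j < t_i. -/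
open MeasureTheory Pointwise



section Aux

variable {X : Type*} [Fintype X] [DecidableEq X]

lemma demand_mem_bounds {pref : X → X → Prop} {b : ℝ} {q : X → ℝ} {d : X → ℝ}
    (h : d ∈ Demand pref b q) : ∀ y, 0 ≤ d y ∧ d y ≤ 1 := by
  intro y
  rcases h with ⟨x, _, rfl, _, _⟩ | ⟨_, rfl⟩
  · unfold basisVec; constructor <;> (split <;> norm_num)
  · simp

lemma lottery_g_integrable {G : Measure (X → ℝ)} [IsProbabilityMeasure G]
    {g : (X → ℝ) → (X → ℝ)} (hm : Measurable g)
    (hb : ∀ᵐ ξ ∂G, ∀ y, 0 ≤ g ξ y ∧ g ξ y ≤ 1) : Integrable g G := by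
  refine (integrable_const (1:ℝ)).mono' hm.aestronglyMeasurable ?_
  filter_upwards [hb] with ξ hξ
  rw [pi_norm_le_iff_of_nonneg zero_le_one]
  intro y
  rw [Real.norm_eq_abs, abs_le]
  exact ⟨by linarith [(hξ y).1], (hξ y).2⟩

lemma lottery_coord_integrable {G : Measure (X → ℝ)} [IsProbabilityMeasure G]
    {g : (X → ℝ) → (X → ℝ)} (hm : Measurable g)
    (hb : ∀ᵐ ξ ∂G, ∀ y, 0 ≤ g ξ y ∧ g ξ y ≤ 1) (y : X) :
    Integrable (fun ξ => g ξ y) G := by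
  refine (integrable_const (1:ℝ)).mono'
    ((measurable_pi_apply y).comp hm).aestronglyMeasurable ?_
  filter_upwards [hb] with ξ hξ
  rw [Real.norm_eq_abs, abs_le]
  exact ⟨by linarith [(hξ y).1], (hξ y).2⟩

end Aux

/-- Theorem 4: under Assumptions 1–3, if budgets are nonincreasing in arrival
time, then every price-equilibrium allocation is equal-type envy-free with
respect to the arrival-time order: an agent can only envy a strictly earlier
arrival. -/
theorem price_equilibrium_allocation_equal_type_envy_free
    {X I : Type*} [Fintype X] [DecidableEq X] [Fintype I]
    (pref : I → X → X → Prop)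
    (hcomplete : ∀ i x y, pref i x y ∨ pref i y x)
    (htrans : ∀ i, Transitive (pref i))
    (b : I → ℝ)
    (G : Measure (X → ℝ)) [IsProbabilityMeasure G]
    (ξlo ξhi : ℝ) (hA1 : Assumption1 G ξlo ξhi)
    -- Assumption 2
    (Blo Bhi : ℝ) (hBlo : 0 < Blo) (hBhi : Blo ≤ Bhi)
    (hA2 : ∀ i, Blo ≤ b i ∧ b i ≤ Bhi)
    -- Assumption 3: the price shock is bounded away from budgets
    (hA3 : ξhi < Blo)
    -- arrivals
    (T : ℕ) (hT : 0 < T)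
    (f : ℕ → I → ℝ) (hf : ∀ t i, 0 ≤ f t i)
    (hfsum : ∀ t ∈ Finset.Icc 1 T, ∑ i, f t i = 1)
    (tarr : I → ℕ) (harr : ∀ t i, 0 < f t i → t = tarr i)
    -- supply, with a null object `o` in excess supply
    (s : X → ℝ) (hs : ∀ x, 0 < s x)
    (o : X) (ho : ∑ i, ∑ n ∈ Finset.Icc 1 T, f n i < s o)
    -- budgets are nonincreasing in arrival time
    (hbudget : ∀ i j, tarr i ≤ tarr j → b j ≤ b i)
    -- a price equilibrium `p` with equilibrium allocation `astar`
    (p : X → ℝ) (hp : ∀ x, 0 ≤ p x)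
    (astar : I → X → ℝ)
    (hastar : ∀ i, astar i ∈ Lottery (pref i) (b i) G p)
    (hfeas : ∀ x, ∑ i, (∑ n ∈ Finset.Icc 1 T, f n i) * astar i x ≤ s x)
    (hclear : ∀ x, 0 < p x → ∑ i, (∑ n ∈ Finset.Icc 1 T, f n i) * astar i x = s x) :
    -- equal-type envy-freeness with respect to the arrival-time order
    ∀ i j : I, StrictStochDom (pref i) (astar j) (astar i) → tarr j < tarr i := by
  classical
  intro i j hdom
  by_contra hnlt
  push_neg at hnlt
  have hbji : b j ≤ b i := hbudget i j hnlt
  obtain ⟨hweak, x0, hstrict⟩ := hdom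
  obtain ⟨gi, hgim, hgid, hgie⟩ := hastar i
  obtain ⟨gj, hgjm, hgjd, hgje⟩ := hastar j
  -- a.e. coordinate bounds
  have hgib : ∀ᵐ ξ ∂G, ∀ y, 0 ≤ gi ξ y ∧ gi ξ y ≤ 1 := by
    filter_upwards [hgid] with ξ hξ using demand_mem_bounds hξ
  have hgjb : ∀ᵐ ξ ∂G, ∀ y, 0 ≤ gj ξ y ∧ gj ξ y ≤ 1 := by
    filter_upwards [hgjd] with ξ hξ using demand_mem_bounds hξ
  have hgii : Integrable gi G := lottery_g_integrable hgim hgib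
  have hgji : Integrable gj G := lottery_g_integrable hgjm hgjb
  -- coordinates of the allocations
  have hcoordi : ∀ y, astar i y = ∫ ξ, gi ξ y ∂G := by
    intro y
    rw [hgie]
    exact ((ContinuousLinearMap.proj (R := ℝ) (φ := fun _ : X => ℝ) y).integral_comp_comm
      hgii).symm
  have hcoordj : ∀ y, astar j y = ∫ ξ, gj ξ y ∂G := by
    intro y
    rw [hgje]
    exact ((ContinuousLinearMap.proj (R := ℝ) (φ := fun _ : X => ℝ) y).integral_comp_comm
      hgji).symm
  -- the null object has price 0
  have hpo : p o = 0 := by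
    by_contra hpo
    have hppos : 0 < p o := lt_of_le_of_ne (hp o) (Ne.symm hpo)
    have hle : ∑ k, (∑ n ∈ Finset.Icc 1 T, f n k) * astar k o ≤
        ∑ k, ∑ n ∈ Finset.Icc 1 T, f n k := by
      apply Finset.sum_le_sum
      intro k _
      have hFk : 0 ≤ ∑ n ∈ Finset.Icc 1 T, f n k :=
        Finset.sum_nonneg fun n _ => hf n k
      obtain ⟨gk, hgkm, hgkd, hgke⟩ := hastar k
      have hgkb : ∀ᵐ ξ ∂G, ∀ y, 0 ≤ gk ξ y ∧ gk ξ y ≤ 1 := by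
        filter_upwards [hgkd] with ξ hξ using demand_mem_bounds hξ
      have hki : Integrable gk G := lottery_g_integrable hgkm hgkb
      have hco : astar k o = ∫ ξ, gk ξ o ∂G := by
        rw [hgke]
        exact ((ContinuousLinearMap.proj (R := ℝ) (φ := fun _ : X => ℝ) o).integral_comp_comm
          hki).symm
      have h1 : astar k o ≤ 1 := by
        rw [hco]
        calc (∫ ξ, gk ξ o ∂G) ≤ ∫ _, (1:ℝ) ∂G := by
              apply integral_mono_ae (lottery_coord_integrable hgkm hgkb o)
                (integrable_const 1)
              filter_upwards [hgkb] with ξ hξ using (hξ o).2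
          _ = 1 := by simp
      calc (∑ n ∈ Finset.Icc 1 T, f n k) * astar k o
          ≤ (∑ n ∈ Finset.Icc 1 T, f n k) * 1 := by
            exact mul_le_mul_of_nonneg_left h1 hFk
        _ = _ := by ring
    have := hclear o hppos
    linarith
  -- a.e. bound on the shock
  have hbound : ∀ᵐ ξ ∂G, ∀ x, ξlo ≤ ξ x ∧ ξ x ≤ ξhi := by
    rw [ae_all_iff]
    intro x
    exact (hA1 x).2.2
  set S : Finset X := Finset.univ.filter (fun y => pref i y x0) with hS
  -- pointwise comparison a.e.
  have hptwise : ∀ᵐ ξ ∂G, ∑ y ∈ S, gj ξ y ≤ ∑ y ∈ S, gi ξ y := by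
    filter_upwards [hgid, hgjd, hbound] with ξ hi hj hb
    have haff : (p + ξ) o ≤ b i := by
      have : (p + ξ) o = ξ o := by simp [hpo]
      rw [this]
      linarith [(hb o).2, (hA2 i).1]
    obtain ⟨xi, hqi, hdi, hbesti, -⟩ := hi.resolve_right (by
      rintro ⟨hno, -⟩; exact hno ⟨o, haff⟩)
    obtain ⟨xj, hqj, hdj, -, -⟩ := hj.resolve_right (by
      rintro ⟨hno, -⟩
      refine hno ⟨o, ?_⟩
      have : (p + ξ) o = ξ o := by simp [hpo]
      rw [this]
      linarith [(hb o).2, (hA2 j).1])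
    have hxij : pref i xi xj := hbesti xj (le_trans hqj hbji)
    rw [hdi, hdj]
    have hsumj : ∑ y ∈ S, basisVec xj y = if xj ∈ S then 1 else 0 := by
      simp only [basisVec]
      rw [Finset.sum_ite_eq' S xj (fun _ => (1:ℝ))]
    have hsumi : ∑ y ∈ S, basisVec xi y = if xi ∈ S then 1 else 0 := by
      simp only [basisVec]
      rw [Finset.sum_ite_eq' S xi (fun _ => (1:ℝ))]
    rw [hsumj, hsumi]
    by_cases hmem : xj ∈ S
    · have hxj0 : pref i xj x0 := by
        have := Finset.mem_filter.mp hmem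
        exact this.2
      have hxi0 : pref i xi x0 := htrans i hxij hxj0
      have hmemi : xi ∈ S := Finset.mem_filter.mpr ⟨Finset.mem_univ _, hxi0⟩
      simp [hmem, hmemi]
    · simp only [if_neg hmem]
      split <;> norm_num
  -- integrate
  have hint : (∫ ξ, ∑ y ∈ S, gj ξ y ∂G) ≤ ∫ ξ, ∑ y ∈ S, gi ξ y ∂G := by
    apply integral_mono_ae
    · exact integrable_finset_sum S fun y _ => lottery_coord_integrable hgjm hgjb y
    · exact integrable_finset_sum S fun y _ => lottery_coord_integrable hgim hgib y
    · exact hptwise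
  have hj_eq : ∑ y ∈ S, astar j y = ∫ ξ, ∑ y ∈ S, gj ξ y ∂G := by
    rw [integral_finset_sum S fun y _ => lottery_coord_integrable hgjm hgjb y]
    exact Finset.sum_congr rfl fun y _ => hcoordj y
  have hi_eq : ∑ y ∈ S, astar i y = ∫ ξ, ∑ y ∈ S, gi ξ y ∂G := by
    rw [integral_finset_sum S fun y _ => lottery_coord_integrable hgim hgib y]
    exact Finset.sum_congr rfl fun y _ => hcoordi y
  have : ∑ y ∈ S, astar j y ≤ ∑ y ∈ S, astar i y := by
    rw [hj_eq, hi_eq]; exact hint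
  have hstrict' : ∑ y ∈ S, astar i y < ∑ y ∈ S, astar j y := by
    convert hstrict using 2
  linarith
end

section
/- Let i be an agent type and let q ∈ ℝ^X satisfy q_x ≠ b_i for every x ∈ X and q_x ≠ q_y for all distinct x, y ∈ X. Then D_i(q) is a singleton, and D_i is locally constant at q: there exists ε > 0 such that D_i(q') = D_i(q) for every q' ∈ ℝ^X with max_{x∈X} |q'_x − q_x| < ε. -/
/-- Strict part of a preference relation. -/
def strictPref {X : Type*} (pref : X → X → Prop) (x y : X) : Prop :=
  pref x y ∧ ¬ pref y x

theorem ContinuousAt.eventually_le_iff_of_ne {α β : Type*} [TopologicalSpace α]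
    [TopologicalSpace β] [LinearOrder β] [OrderClosedTopology β] {f g : α → β} {a : α}
    (hf : ContinuousAt f a) (hg : ContinuousAt g a) (h : f a ≠ g a) :
    ∀ᶠ x in nhds a, (f x ≤ g x ↔ f a ≤ g a) := by
  rcases h.lt_or_gt with h | h
  · filter_upwards [hf.eventually_lt hg h] with x hx using iff_of_true hx.le h.le
  · filter_upwards [hg.eventually_lt hf h] with x hx using iff_of_false hx.not_ge h.not_ge

section Preference

variable {X : Type*} {pref : X → X → Prop}

theorem exists_forall_pref_of_finite [Finite X] (hcomplete : ∀ x y, pref x y ∨ pref y x)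
    (htrans : Transitive pref) {s : Set X} (hs : s.Nonempty) :
    ∃ x ∈ s, ∀ y ∈ s, pref x y := by
  have : IsTrans X (strictPref pref) :=
    ⟨fun _ _ _ hxy hyz => ⟨htrans hxy.1 hyz.1, fun hzx => hxy.2 (htrans hyz.1 hzx)⟩⟩
  have : Std.Irrefl (strictPref pref) := ⟨fun _ h => h.2 h.1⟩
  obtain ⟨x, hx, hmin⟩ := (Finite.wellFounded_of_trans_of_irrefl (strictPref pref)).has_min s hs
  refine ⟨x, hx, fun y hy => ?_⟩
  by_contra hxy
  exact hmin y hy ⟨(hcomplete x y).resolve_left hxy, hxy⟩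

variable [DecidableEq X] {b : ℝ} {q q' : X → ℝ}

theorem demand_congr (hbudget : ∀ x, q' x ≤ b ↔ q x ≤ b)
    (hprice : ∀ x y, q' x ≤ q' y ↔ q x ≤ q y) :
    Demand pref b q' = Demand pref b q := by
  simp only [Demand, hbudget, hprice]

theorem demand_eq_zero_of_not_affordable (h : ¬ ∃ x, q x ≤ b) : Demand pref b q = {0} := by
  ext d
  simp only [Demand, Set.mem_ofPred_eq, Set.mem_singleton_iff]
  refine ⟨?_, fun hd => Or.inr ⟨h, hd⟩⟩
  rintro (⟨x, hx, -⟩ | ⟨-, rfl⟩)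
  · exact absurd ⟨x, hx⟩ h
  · rfl

theorem exists_demand_eq_singleton [Finite X] (hcomplete : ∀ x y, pref x y ∨ pref y x)
    (htrans : Transitive pref) (hq : Function.Injective q) :
    ∃ d, Demand pref b q = {d} := by
  by_cases haff : ∃ x, q x ≤ b
  swap
  · exact ⟨0, demand_eq_zero_of_not_affordable haff⟩
  set M := {x | q x ≤ b ∧ ∀ y, q y ≤ b → pref x y}
  have hM : M.Nonempty := by
    obtain ⟨m, hm, hmax⟩ := exists_forall_pref_of_finite hcomplete htrans haff
    exact ⟨m, hm, hmax⟩
  obtain ⟨x₀, hx₀, hcheapest⟩ := Set.exists_min_image M q M.toFinite hM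
  refine ⟨basisVec x₀, Set.ext fun d => ⟨?_, ?_⟩⟩
  · rintro (⟨x, hx, rfl, hmax, hcheap⟩ | ⟨hnone, -⟩)
    · rw [hq (le_antisymm (hcheap x₀ hx₀.1 hx₀.2) (hcheapest x ⟨hx, hmax⟩))]
      rfl
    · exact absurd haff hnone
  · rintro rfl
    exact Or.inl ⟨x₀, hx₀.1, rfl, hx₀.2, fun y hy hymax => hcheapest y ⟨hy, hymax⟩⟩

theorem eventually_demand_eq [Finite X] (hbdry : ∀ x, q x ≠ b) (hq : Function.Injective q) :
    ∀ᶠ q' in nhds q, Demand pref b q' = Demand pref b q := by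
  have hbudget : ∀ᶠ q' in nhds q, ∀ x, (q' x ≤ b ↔ q x ≤ b) :=
    Filter.eventually_all.2 fun x =>
      (continuous_apply x).continuousAt.eventually_le_iff_of_ne continuousAt_const (hbdry x)
  have hprice : ∀ᶠ q' in nhds q, ∀ x y, (q' x ≤ q' y ↔ q x ≤ q y) := by
    refine Filter.eventually_all.2 fun x => Filter.eventually_all.2 fun y => ?_
    rcases eq_or_ne x y with rfl | hxy
    · simp
    · exact (continuous_apply x).continuousAt.eventually_le_iff_of_ne
        (continuous_apply y).continuousAt (hq.ne hxy)
  filter_upwards [hbudget, hprice] with q' h₁ h₂ using demand_congr h₁ h₂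

end Preference

theorem demand_singleton_locally_constant_general
    {X : Type*} [Fintype X] [DecidableEq X]
    (pref : X → X → Prop)
    (hcomplete : ∀ x y, pref x y ∨ pref y x)
    (htrans : Transitive pref)
    (bi : ℝ)
    (q : X → ℝ) (hbdry : ∀ x, q x ≠ bi)
    (hties : ∀ x y : X, x ≠ y → q x ≠ q y) :
    (∃ d : X → ℝ, Demand pref bi q = {d}) ∧
    ∃ ε > 0, ∀ q' : X → ℝ, (∀ x, |q' x - q x| < ε) →
      Demand pref bi q' = Demand pref bi q := by
  have hq : Function.Injective q := fun x y => not_imp_not.mp (hties x y)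
  refine ⟨exists_demand_eq_singleton hcomplete htrans hq, ?_⟩
  obtain ⟨ε, hε, hball⟩ :=
    Metric.eventually_nhds_iff.1 (eventually_demand_eq (pref := pref) hbdry hq)
  refine ⟨ε, hε, fun q' hq' => hball ((dist_pi_lt_iff hε).2 fun x => ?_)⟩
  simpa only [Real.dist_eq] using hq' x

/-- Claim 1 of Theorem 3(ii): away from the budget boundary and price ties, the
demand correspondence is a singleton and locally constant. -/
theorem demand_singleton_locally_constant
    {X : Type*} [Fintype X] [DecidableEq X]
    (pref : X → X → Prop)
    (hcomplete : ∀ x y, pref x y ∨ pref y x)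
    (htrans : Transitive pref)
    (bi : ℝ) (hbi : 0 < bi)
    (q : X → ℝ) (hbdry : ∀ x, q x ≠ bi)
    (hties : ∀ x y : X, x ≠ y → q x ≠ q y) :
    (∃ d : X → ℝ, Demand pref bi q = {d}) ∧
    ∃ ε > 0, ∀ q' : X → ℝ, (∀ x, |q' x - q x| < ε) →
      Demand pref bi q' = Demand pref bi q :=
  demand_singleton_locally_constant_general pref hcomplete htrans bi q hbdry hties
end
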